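/- arXiv:2302.11615 — 2 statements merged into one kernel-verified Lean document; each statement's English description precedes it below -/
import Mathlib

section
/- Let X be a strongly causal, non-timelike locally isolating, and chronological Lorentzian pre-length space with timelike curvature bounded above by 0. Then X is covered by timelike (≤0)-comparison neighbourhoods U on which τ is finite, i.e. τ(p,q) < ∞ for all p, q ∈ U; in particular, on such a neighbourhood τ is finite and continuous on all of U × U, every pair x ≪ y in U is joined by a geodesic contained in U, and every timelike triangle contained in U satisfies size bounds for 𝕃²(0). (This is the K = 0 case of the automatic size bounds lemma.) -/
open Set Topology Filter
open scoped ENNReal NNReal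

/-- A Lorentzian pre-length space: a metric space `X` together with a chronological
relation `≪`, a causal relation `≤` and a time separation function `τ : X × X → [0,∞]`. -/
structure LorentzPLS (X : Type*) [MetricSpace X] where
  chron : X → X → Prop
  causal : X → X → Prop
  tau : X → X → ℝ≥0∞
  causal_refl : ∀ x, causal x x
  causal_trans : ∀ {x y z}, causal x y → causal y z → causal x z
  chron_trans : ∀ {x y z}, chron x y → chron y z → chron x z
  chron_le_causal : ∀ {x y}, chron x y → causal x y
  tau_lsc : LowerSemicontinuous fun p : X × X => tau p.1 p.2
  tau_rev_triangle : ∀ {x y z}, causal x y → causal y z → tau x y + tau y z ≤ tau x z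
  tau_pos_iff : ∀ x y, 0 < tau x y ↔ chron x y

namespace LorentzPLS

variable {X : Type*} [MetricSpace X]

/-- Timelike future. -/
def Ifut (L : LorentzPLS X) (x : X) : Set X := {y | L.chron x y}

/-- Timelike past. -/
def Ipast (L : LorentzPLS X) (x : X) : Set X := {y | L.chron y x}

/-- Timelike diamond `I(p,q)`. -/
def diamond (L : LorentzPLS X) (p q : X) : Set X := L.Ifut p ∩ L.Ipast q

/-- Strong causality: the timelike diamonds form a subbasis for the metric topology. -/
def StronglyCausal (L : LorentzPLS X) : Prop :=
  TopologicalSpace.generateFrom {s : Set X | ∃ p q : X, s = L.diamond p q}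
    = (inferInstance : TopologicalSpace X)

/-- Non-timelike local isolation. -/
def NonTimelikeLocallyIsolating (L : LorentzPLS X) : Prop :=
  (∀ a : X, (L.Ifut a).Nonempty → ∀ U ∈ 𝓝 a, ∃ b ∈ U, L.chron a b) ∧
  (∀ a : X, (L.Ipast a).Nonempty → ∀ U ∈ 𝓝 a, ∃ b ∈ U, L.chron b a)

/-- Chronology: no point is timelike related to itself. -/
def Chronological (L : LorentzPLS X) : Prop := ∀ x : X, ¬ L.chron x x

/-- A future-directed causal curve, parameterized on `[0,1]`
(locally Lipschitz on the compact interval `[0,1]`, i.e. Lipschitz there). -/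
structure IsCausalCurve (L : LorentzPLS X) (γ : ℝ → X) : Prop where
  lip : ∃ K : ℝ≥0, LipschitzOnWith K γ (Icc 0 1)
  mono : ∀ ⦃s t : ℝ⦄, s ∈ Icc (0:ℝ) 1 → t ∈ Icc (0:ℝ) 1 → s < t → L.causal (γ s) (γ t)

/-- A future-directed timelike curve, parameterized on `[0,1]`. -/
structure IsTimelikeCurve (L : LorentzPLS X) (γ : ℝ → X) : Prop where
  lip : ∃ K : ℝ≥0, LipschitzOnWith K γ (Icc 0 1)
  mono : ∀ ⦃s t : ℝ⦄, s ∈ Icc (0:ℝ) 1 → t ∈ Icc (0:ℝ) 1 → s < t → L.chron (γ s) (γ t)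

/-- The τ-length of a curve on `[0,1]`: the infimum over partitions
`0 = t₀ < t₁ < ⋯ < tₙ = 1` of `Σᵢ τ(γ(tᵢ), γ(tᵢ₊₁))`. -/
noncomputable def tauLength (L : LorentzPLS X) (γ : ℝ → X) : ℝ≥0∞ :=
  ⨅ (n : ℕ) (f : Fin (n + 1) → ℝ)
    (_ : f 0 = 0 ∧ f (Fin.last n) = 1 ∧ StrictMono f),
    ∑ i : Fin n, L.tau (γ (f i.castSucc)) (γ (f i.succ))

/-- A geodesic (distance realizer) from `x` to `y`, parameterized on `[0,1]`. -/
def IsGeodesic (L : LorentzPLS X) (x y : X) (γ : ℝ → X) : Prop :=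
  L.IsCausalCurve γ ∧ γ 0 = x ∧ γ 1 = y ∧ L.tauLength γ = L.tau x y

/-- Regularity: geodesics between timelike related points are timelike. -/
def Regular (L : LorentzPLS X) : Prop :=
  ∀ (x y : X) (γ : ℝ → X), L.chron x y → L.IsGeodesic x y γ → L.IsTimelikeCurve γ

/-- A geodesic parameterized on `[0,1]` with constant speed. -/
def IsConstSpeedGeodesic (L : LorentzPLS X) (x y : X) (γ : ℝ → X) : Prop :=
  L.IsGeodesic x y γ ∧
  ∀ ⦃s t : ℝ⦄, s ∈ Icc (0:ℝ) 1 → t ∈ Icc (0:ℝ) 1 → s ≤ t →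
    L.tau (γ s) (γ t) = ENNReal.ofReal (t - s) * L.tau x y

end LorentzPLS

/-- Causal relation of the Minkowski plane 𝕃²(0). -/
def minkLe (p q : ℝ × ℝ) : Prop := |q.2 - p.2| ≤ q.1 - p.1

/-- Chronological relation of the Minkowski plane 𝕃²(0). -/
def minkLt (p q : ℝ × ℝ) : Prop := |q.2 - p.2| < q.1 - p.1

open Classical in
/-- Time separation of the Minkowski plane 𝕃²(0). -/
noncomputable def minkTau (p q : ℝ × ℝ) : ℝ≥0∞ :=
  if minkLe p q then ENNReal.ofReal (Real.sqrt ((q.1 - p.1) ^ 2 - (q.2 - p.2) ^ 2)) else 0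

namespace LorentzPLS

variable {X : Type*} [MetricSpace X]

/-- A timelike triangle `Δ(x,y,z)`: three timelike related points together with
pairwise connecting geodesics. -/
structure TimelikeTriangle (L : LorentzPLS X) where
  x : X
  y : X
  z : X
  gxy : ℝ → X
  gyz : ℝ → X
  gxz : ℝ → X
  hxy : L.chron x y
  hyz : L.chron y z
  geo_xy : L.IsGeodesic x y gxy
  geo_yz : L.IsGeodesic y z gyz
  geo_xz : L.IsGeodesic x z gxz

/-- The triangle is contained in `U`. -/
def TriangleIn (L : LorentzPLS X) (T : TimelikeTriangle L) (U : Set X) : Prop :=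
  (∀ t ∈ Icc (0:ℝ) 1, T.gxy t ∈ U) ∧ (∀ t ∈ Icc (0:ℝ) 1, T.gyz t ∈ U) ∧
  (∀ t ∈ Icc (0:ℝ) 1, T.gxz t ∈ U)

/-- A comparison triangle in 𝕃²(0) for the timelike triangle `T`. -/
def IsComparisonTriangle (L : LorentzPLS X) (T : TimelikeTriangle L)
    (xb yb zb : ℝ × ℝ) : Prop :=
  minkLt xb yb ∧ minkLt yb zb ∧
  minkTau xb yb = L.tau T.x T.y ∧ minkTau yb zb = L.tau T.y T.z ∧
  minkTau xb zb = L.tau T.x T.z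

/-- `rb` is a comparison point (in the comparison triangle `(xb,yb,zb)` in 𝕃²(0))
for a point `r` on one of the sides of the triangle `T`. -/
def IsComparisonPoint (L : LorentzPLS X) (T : TimelikeTriangle L)
    (xb yb zb : ℝ × ℝ) (r : X) (rb : ℝ × ℝ) : Prop :=
  ((∃ t ∈ Icc (0:ℝ) 1, T.gxy t = r) ∧ rb ∈ segment ℝ xb yb ∧
    minkTau xb rb = L.tau T.x r ∧ minkTau rb yb = L.tau r T.y) ∨
  ((∃ t ∈ Icc (0:ℝ) 1, T.gyz t = r) ∧ rb ∈ segment ℝ yb zb ∧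
    minkTau yb rb = L.tau T.y r ∧ minkTau rb zb = L.tau r T.z) ∨
  ((∃ t ∈ Icc (0:ℝ) 1, T.gxz t = r) ∧ rb ∈ segment ℝ xb zb ∧
    minkTau xb rb = L.tau T.x r ∧ minkTau rb zb = L.tau r T.z)

/-- The triangle `T` satisfies the comparison condition with upper bound 0:
for any comparison triangle and any comparison points, `τ(r,s) ≤ τ̄(r̄,s̄)`. -/
def SatisfiesComparison (L : LorentzPLS X) (T : TimelikeTriangle L) : Prop :=
  ∀ xb yb zb : ℝ × ℝ, L.IsComparisonTriangle T xb yb zb →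
    ∀ (r s : X) (rb sb : ℝ × ℝ), L.IsComparisonPoint T xb yb zb r rb →
      L.IsComparisonPoint T xb yb zb s sb →
      L.tau r s ≤ minkTau rb sb

/-- Condition (i) of the (≤0)-comparison neighbourhood definition. -/
def Cond1 (L : LorentzPLS X) (U : Set X) : Prop :=
  IsOpen ((U ×ˢ U) ∩ {pq : X × X | L.tau pq.1 pq.2 < ⊤}) ∧
  ContinuousOn (fun pq : X × X => L.tau pq.1 pq.2)
    ((U ×ˢ U) ∩ {pq : X × X | L.tau pq.1 pq.2 < ⊤})

/-- Condition (ii) of the (≤0)-comparison neighbourhood definition. -/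
def Cond2 (L : LorentzPLS X) (U : Set X) : Prop :=
  ∀ a ∈ U, ∀ b ∈ U, L.chron a b → L.tau a b < ⊤ →
    ∃ γ : ℝ → X, L.IsGeodesic a b γ ∧ ∀ t ∈ Icc (0:ℝ) 1, γ t ∈ U

/-- Condition (iii) of the (≤0)-comparison neighbourhood definition. -/
def Cond3 (L : LorentzPLS X) (U : Set X) : Prop :=
  ∀ T : TimelikeTriangle L, L.TriangleIn T U → L.tau T.x T.z < ⊤ →
    L.SatisfiesComparison T

/-- A timelike (≤0)-comparison neighbourhood. -/
structure IsComparisonNbhdLeq0 (L : LorentzPLS X) (U : Set X) : Prop where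
  isOpen : IsOpen U
  cond1 : L.Cond1 U
  cond2 : L.Cond2 U
  cond3 : L.Cond3 U

/-- Timelike curvature bounded above by 0: `X` is covered by
timelike (≤0)-comparison neighbourhoods. -/
def CurvBoundedAboveZero (L : LorentzPLS X) : Prop :=
  ∀ x : X, ∃ U : Set X, x ∈ U ∧ L.IsComparisonNbhdLeq0 U

end LorentzPLS

/-! Take a (≤0)-comparison neighbourhood `V` of `x`. Chronology gives `τ(x,x) = 0`, so
`(x,x)` lies in the open set `(V × V) ∩ {τ < ∞}` and there is an open `W ∋ x` with `τ`
finite on `W × W`. Strong causality provides a finite intersection `B ⊆ W` of timelike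
diamonds containing `x`. Such a `B` is causally convex, hence contains every geodesic
between its points, so all three comparison conditions pass from `V` to `B`. -/

namespace LorentzPLS

variable {X : Type*} [MetricSpace X] (L : LorentzPLS X)

def IsCausallyConvex (S : Set X) : Prop :=
  ∀ a ∈ S, ∀ b ∈ S, ∀ r, L.causal a r → L.causal r b → r ∈ S

variable {L}

theorem chron_of_chron_of_causal {p a r : X} (hpa : L.chron p a) (har : L.causal a r) :
    L.chron p r := by
  have hle : L.tau p a ≤ L.tau p r :=
    le_self_add.trans (L.tau_rev_triangle (L.chron_le_causal hpa) har)
  rw [← L.tau_pos_iff] at hpa ⊢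
  exact hpa.trans_le hle

theorem chron_of_causal_of_chron {r b q : X} (hrb : L.causal r b) (hbq : L.chron b q) :
    L.chron r q := by
  have hle : L.tau b q ≤ L.tau r q :=
    le_add_self.trans (L.tau_rev_triangle hrb (L.chron_le_causal hbq))
  rw [← L.tau_pos_iff] at hbq ⊢
  exact hbq.trans_le hle

theorem Chronological.tau_self (hchron : L.Chronological) (x : X) : L.tau x x = 0 :=
  nonpos_iff_eq_zero.1 <| not_lt.1 fun h => hchron x ((L.tau_pos_iff x x).1 h)

theorem isCausallyConvex_diamond (p q : X) : L.IsCausallyConvex (L.diamond p q) :=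
  fun _ ha _ hb _ har hrb =>
    ⟨chron_of_chron_of_causal ha.1 har, chron_of_causal_of_chron hrb hb.2⟩

theorem isCausallyConvex_sInter {S : Set (Set X)} (hS : ∀ s ∈ S, L.IsCausallyConvex s) :
    L.IsCausallyConvex (⋂₀ S) :=
  fun _ ha _ hb r har hrb s hs => hS s hs _ (ha s hs) _ (hb s hs) r har hrb

theorem StronglyCausal.exists_isCausallyConvex_subset (hsc : L.StronglyCausal) {x : X}
    {W : Set X} (hxW : x ∈ W) (hW : IsOpen W) :
    ∃ B, IsOpen B ∧ x ∈ B ∧ B ⊆ W ∧ L.IsCausallyConvex B := by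
  have hbasis := TopologicalSpace.isTopologicalBasis_of_subbasis hsc.symm
  obtain ⟨B, hBmem, hxB, hBW⟩ := hbasis.exists_subset_of_mem_open hxW hW
  refine ⟨B, hbasis.isOpen hBmem, hxB, hBW, ?_⟩
  obtain ⟨f, ⟨-, hf⟩, rfl⟩ := hBmem
  refine isCausallyConvex_sInter fun s hs => ?_
  obtain ⟨p, q, rfl⟩ := hf hs
  exact isCausallyConvex_diamond p q

theorem IsGeodesic.causal_left {x y : X} {γ : ℝ → X} (hγ : L.IsGeodesic x y γ) {t : ℝ}
    (ht : t ∈ Icc (0 : ℝ) 1) : L.causal x (γ t) := by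
  rw [← hγ.2.1]
  rcases ht.1.eq_or_lt with h | h
  · rw [← h]; exact L.causal_refl _
  · exact hγ.1.mono (left_mem_Icc.2 zero_le_one) ht h

theorem IsGeodesic.causal_right {x y : X} {γ : ℝ → X} (hγ : L.IsGeodesic x y γ) {t : ℝ}
    (ht : t ∈ Icc (0 : ℝ) 1) : L.causal (γ t) y := by
  rw [← hγ.2.2.1]
  rcases ht.2.eq_or_lt with h | h
  · rw [h]; exact L.causal_refl _
  · exact hγ.1.mono ht (right_mem_Icc.2 zero_le_one) h

theorem IsCausallyConvex.geodesic_mem {S : Set X} (hS : L.IsCausallyConvex S) {x y : X}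
    (hx : x ∈ S) (hy : y ∈ S) {γ : ℝ → X} (hγ : L.IsGeodesic x y γ) {t : ℝ}
    (ht : t ∈ Icc (0 : ℝ) 1) : γ t ∈ S :=
  hS x hx y hy _ (hγ.causal_left ht) (hγ.causal_right ht)

namespace IsComparisonNbhdLeq0

variable {V : Set X}

theorem of_isCausallyConvex_subset (hV : L.IsComparisonNbhdLeq0 V) {B : Set X}
    (hB : IsOpen B) (hBV : B ⊆ V) (hconv : L.IsCausallyConvex B) :
    L.IsComparisonNbhdLeq0 B := by
  have hsub : (B ×ˢ B) ∩ {pq : X × X | L.tau pq.1 pq.2 < ⊤} ⊆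
      (V ×ˢ V) ∩ {pq : X × X | L.tau pq.1 pq.2 < ⊤} :=
    inter_subset_inter_left _ (prod_mono hBV hBV)
  refine ⟨hB, ⟨?_, hV.cond1.2.mono hsub⟩, ?_, ?_⟩
  · rw [Subset.antisymm (subset_inter inter_subset_left hsub)
      (inter_subset_inter_right _ inter_subset_right)]
    exact (hB.prod hB).inter hV.cond1.1
  · intro a ha b hb hab hfin
    obtain ⟨γ, hγ, -⟩ := hV.cond2 a (hBV ha) b (hBV hb) hab hfin
    exact ⟨γ, hγ, fun t ht => hconv.geodesic_mem ha hb hγ ht⟩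
  · intro T ⟨hxy, hyz, hxz⟩ hfin
    exact hV.cond3 T ⟨fun t ht => hBV (hxy t ht), fun t ht => hBV (hyz t ht),
      fun t ht => hBV (hxz t ht)⟩ hfin

theorem exists_tau_lt_top_nhds (hV : L.IsComparisonNbhdLeq0 V) {x : X} (hxV : x ∈ V)
    (hx : L.tau x x < ⊤) :
    ∃ W, IsOpen W ∧ x ∈ W ∧ W ⊆ V ∧ ∀ p ∈ W, ∀ q ∈ W, L.tau p q < ⊤ := by
  obtain ⟨U₁, U₂, hU₁, hU₂, hx₁, hx₂, hsub⟩ :=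
    isOpen_prod_iff.1 hV.cond1.1 x x ⟨⟨hxV, hxV⟩, hx⟩
  refine ⟨U₁ ∩ U₂, hU₁.inter hU₂, ⟨hx₁, hx₂⟩, fun p hp => ?_, fun p hp q hq => ?_⟩
  · exact (hsub (mk_mem_prod hp.1 hp.2)).1.1
  · exact (hsub (mk_mem_prod hp.1 hq.2)).2

theorem continuousOn_tau (hV : L.IsComparisonNbhdLeq0 V)
    (hfin : ∀ p ∈ V, ∀ q ∈ V, L.tau p q < ⊤) :
    ContinuousOn (fun pq : X × X => L.tau pq.1 pq.2) (V ×ˢ V) :=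
  hV.cond1.2.mono fun _ hpq => ⟨hpq, hfin _ hpq.1 _ hpq.2⟩

end IsComparisonNbhdLeq0

end LorentzPLS

theorem automatic_size_bounds_general {X : Type*} [MetricSpace X] (L : LorentzPLS X)
    (hsc : L.StronglyCausal)
    (hchron : L.Chronological) (hcurv : L.CurvBoundedAboveZero) :
    ∀ x : X, ∃ U : Set X, x ∈ U ∧ L.IsComparisonNbhdLeq0 U ∧
      (∀ p ∈ U, ∀ q ∈ U, L.tau p q < ⊤) ∧
      ContinuousOn (fun pq : X × X => L.tau pq.1 pq.2) (U ×ˢ U) ∧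
      (∀ p ∈ U, ∀ q ∈ U, L.chron p q →
        ∃ γ : ℝ → X, L.IsGeodesic p q γ ∧ ∀ t ∈ Set.Icc (0:ℝ) 1, γ t ∈ U) ∧
      (∀ T : LorentzPLS.TimelikeTriangle L, L.TriangleIn T U → L.tau T.x T.z < ⊤) := by
  intro x
  obtain ⟨V, hxV, hV⟩ := hcurv x
  obtain ⟨W, hW, hxW, hWV, hWfin⟩ :=
    hV.exists_tau_lt_top_nhds hxV (by simp [hchron.tau_self x])
  obtain ⟨U, hU, hxU, hUW, hconv⟩ := hsc.exists_isCausallyConvex_subset hxW hW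
  have hUV := hV.of_isCausallyConvex_subset hU (hUW.trans hWV) hconv
  have hfin : ∀ p ∈ U, ∀ q ∈ U, L.tau p q < ⊤ := fun p hp q hq => hWfin p (hUW hp) q (hUW hq)
  refine ⟨U, hxU, hUV, hfin, hUV.continuousOn_tau hfin,
    fun p hp q hq hpq => hUV.cond2 p hp q hq hpq (hfin p hp q hq), fun T hT => ?_⟩
  have hx : T.x ∈ U := T.geo_xz.2.1 ▸ hT.2.2 0 (left_mem_Icc.2 zero_le_one)
  have hz : T.z ∈ U := T.geo_xz.2.2.1 ▸ hT.2.2 1 (right_mem_Icc.2 zero_le_one)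
  exact hfin _ hx _ hz

/-- **Automatic size bounds (K = 0).** A strongly causal, non-timelike locally isolating
and chronological Lorentzian pre-length space with timelike curvature bounded above
by 0 is covered by timelike (≤0)-comparison neighbourhoods `U` on which `τ` is finite;
in particular, on such `U`, `τ` is finite and continuous on all of `U × U`, every pair
`x ≪ y` in `U` is joined by a geodesic contained in `U`, and every timelike triangle
contained in `U` satisfies size bounds for 𝕃²(0). -/
theorem automatic_size_bounds {X : Type*} [MetricSpace X] (L : LorentzPLS X)
    (hsc : L.StronglyCausal) (hnt : L.NonTimelikeLocallyIsolating)
    (hchron : L.Chronological) (hcurv : L.CurvBoundedAboveZero) :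
    ∀ x : X, ∃ U : Set X, x ∈ U ∧ L.IsComparisonNbhdLeq0 U ∧
      (∀ p ∈ U, ∀ q ∈ U, L.tau p q < ⊤) ∧
      ContinuousOn (fun pq : X × X => L.tau pq.1 pq.2) (U ×ˢ U) ∧
      (∀ p ∈ U, ∀ q ∈ U, L.chron p q →
        ∃ γ : ℝ → X, L.IsGeodesic p q γ ∧ ∀ t ∈ Set.Icc (0:ℝ) 1, γ t ∈ U) ∧
      (∀ T : LorentzPLS.TimelikeTriangle L, L.TriangleIn T U → L.tau T.x T.z < ⊤) :=
  automatic_size_bounds_general L hsc hchron hcurv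
end

section
/- Let t, m, p, q be real numbers with π/2 < t < π, 0 < cos((p−q)/2), cos((p−q)/2) < cos(m), 0 ≤ p + q ≤ 2π, and cos(m)·cos(t) = cos((p+q)/2)·cos((p−q)/2). Then p + q > 2t. (This is the key trigonometric inequality in the proof of the bound on the finite diameter of Lorentzian pre-length spaces with global timelike curvature bounded below by −1, obtained from the hyperbolic law of cosines in anti-de Sitter space.) -/
/-! Multiplying `cos((p−q)/2) < cos m` by `cos t < 0` and using the identity gives
`cos((p+q)/2) < cos t`; since cosine is strictly decreasing on `[0, π]`, `t < (p+q)/2`. -/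

lemma lt_of_mul_eq_mul_of_lt_of_neg {a b c x : ℝ} (hc : 0 < c) (hca : c < a) (hb : b < 0)
    (h : a * b = x * c) : x < b := by
  have : x * c < b * c := by
    rw [← h, mul_comm b]
    exact mul_lt_mul_of_neg_right hca hb
  exact lt_of_mul_lt_mul_right this hc.le

/-- **Key trigonometric inequality in the Lorentzian Bonnet–Myers bound.** If
`π/2 < t < π`, `0 < cos((p−q)/2) < cos m`, `0 ≤ p + q ≤ 2π`, and
`cos m · cos t = cos((p+q)/2) · cos((p−q)/2)`, then `p + q > 2t`. -/
theorem bonnet_myers_trig_inequality (t m p q : ℝ)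
    (ht1 : Real.pi / 2 < t) (ht2 : t < Real.pi)
    (h1 : 0 < Real.cos ((p - q) / 2))
    (h2 : Real.cos ((p - q) / 2) < Real.cos m)
    (h3 : 0 ≤ p + q) (h4 : p + q ≤ 2 * Real.pi)
    (h5 : Real.cos m * Real.cos t = Real.cos ((p + q) / 2) * Real.cos ((p - q) / 2)) :
    2 * t < p + q := by
  have hcos_t : Real.cos t < 0 :=
    Real.cos_neg_of_pi_div_two_lt_of_lt ht1 (by linarith [Real.pi_pos])
  have hcos_lt : Real.cos ((p + q) / 2) < Real.cos t :=
    lt_of_mul_eq_mul_of_lt_of_neg h1 h2 hcos_t h5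
  have hmid : (p + q) / 2 ∈ Set.Icc 0 Real.pi := ⟨by linarith, by linarith⟩
  have ht : t ∈ Set.Icc 0 Real.pi := ⟨by linarith [Real.pi_pos], ht2.le⟩
  have := Real.strictAntiOn_cos.lt_iff_gt hmid ht |>.mp hcos_lt
  linarith
end
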